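/- arXiv:2304.10918 — 6 statements merged into one kernel-verified Lean document; each statement's English description precedes it below -/
import Mathlib

section
/- (Fatou's boundary continuity theorem for the Poisson integral) Let f be a 2π-periodic integrable function on [−π, π] and let U(re^{iθ}) = (1/2π)∫_{−π}^{π} f(t) p_r(θ − t) dt be its Poisson integral in the open unit disc. If f is continuous at θ₀, then U(z) → f(θ₀) as z → e^{iθ₀} with z in the open unit disc (unrestricted approach). -/
/-!
Writing `z = r e^{iθ}`, the kernel `p_r(θ - t)` is Mathlib's Poisson kernel
`(1 - |z|²) / |e^{it} - z|²`, so the integrand does not depend on the branch of `arg z`.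
After shifting the period to `[θ₀ - π, θ₀ + π]`, the normalized kernels are peak functions
at `θ₀` as `z → e^{iθ₀}`: they are nonnegative, have mean one (the Poisson formula for the
constant `1`), and tend to zero uniformly away from `θ₀`, where `|e^{it} - z|` stays bounded
below while `1 - |z|² → 0`.
-/

open Filter Set Real MeasureTheory Complex

/-- The Poisson kernel `p_r(θ) = (1 - r²)/(1 - 2r cos θ + r²)`. -/
noncomputable def fatouPoissonKernel (r θ : ℝ) : ℝ :=
  (1 - r ^ 2) / (1 - 2 * r * Real.cos θ + r ^ 2)

open Metric Topology

theorem fatouPoissonKernel_sub_eq_poissonKernel (r θ t : ℝ) :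
    fatouPoissonKernel r (θ - t) = poissonKernel 0 (r * exp (θ * I)) (circleMap 0 1 t) := by
  have hden :
      ‖circleMap 0 1 t - r * exp (θ * I)‖ ^ 2 = 1 - 2 * r * Real.cos (θ - t) + r ^ 2 := by
    rw [← normSq_eq_norm_sq, normSq_apply]
    simp only [circleMap, zero_add, ofReal_one, one_mul, sub_re, sub_im, mul_re, mul_im, ofReal_re,
      ofReal_im, exp_ofReal_mul_I_re, exp_ofReal_mul_I_im, zero_mul, sub_zero, add_zero,
      Real.cos_sub]
    linear_combination Real.sin_sq_add_cos_sq t + r ^ 2 * Real.sin_sq_add_cos_sq θ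
  have hnum : ‖r * exp (θ * I)‖ ^ 2 = r ^ 2 := by
    rw [norm_mul, norm_exp_ofReal_mul_I, mul_one, norm_real, Real.norm_eq_abs, sq_abs]
  simp only [fatouPoissonKernel, poissonKernel, sub_zero, hden, hnum, norm_circleMap_zero, abs_one,
    one_pow]

theorem integral_poissonKernel_circleMap {c w : ℂ} {R : ℝ} (hw : w ∈ ball c R) (a : ℝ) :
    ∫ t in a..a + 2 * π, poissonKernel c w (circleMap c R t) = 2 * π := by
  have h := InnerProductSpace.HarmonicContOnCl.circleAverage_poissonKernel_smul
    (InnerProductSpace.harmonicContOnCl_const (c := (1 : ℝ))) hw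
  rw [Real.circleAverage_def] at h
  simp only [smul_eq_mul, Pi.mul_apply, mul_one] at h
  have hper : Function.Periodic (fun t => poissonKernel c w (circleMap c R t)) (2 * π) :=
    (periodic_circleMap c R).comp (poissonKernel c w)
  rw [hper.intervalIntegral_add_eq a 0, zero_add]
  field_simp at h
  linarith

theorem poissonKernel_nonneg {c z w : ℂ} (h : ‖z - c‖ ≤ ‖w - c‖) : 0 ≤ poissonKernel c z w :=
  div_nonneg (sub_nonneg.2 (pow_le_pow_left₀ (norm_nonneg _) h 2)) (sq_nonneg _)

theorem tendstoUniformlyOn_poissonKernel {c p : ℂ} {R : ℝ} {K : Set ℂ} (hp : p ∈ sphere c R)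
    (hK : K ⊆ sphere c R) (hpK : p ∉ closure K) :
    TendstoUniformlyOn (poissonKernel c) 0 (𝓝 p) K := by
  obtain ⟨δ, hδ, hsep⟩ : ∃ δ > 0, ∀ w ∈ K, δ ≤ dist p w := by
    simpa [Metric.mem_closure_iff] using hpK
  have hnum : Tendsto (fun z => R ^ 2 - ‖z - c‖ ^ 2) (𝓝 p) (𝓝 0) := by
    have h : Continuous fun z : ℂ => R ^ 2 - ‖z - c‖ ^ 2 := by fun_prop
    simpa [mem_sphere_iff_norm.1 hp] using h.tendsto p
  rw [Metric.tendstoUniformlyOn_iff]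
  intro ε hε
  filter_upwards [ball_mem_nhds p (half_pos hδ),
    Metric.tendsto_nhds.1 hnum (ε * (δ / 2) ^ 2) (by positivity)] with z hzp hz w hw
  have hwz : δ / 2 ≤ ‖w - z‖ := by
    rw [← dist_eq_norm]
    linarith [hsep w hw, dist_triangle p z w, dist_comm p z, dist_comm w z, mem_ball.1 hzp]
  rw [Real.dist_eq, sub_zero] at hz
  rw [Pi.zero_apply, dist_zero_left, poissonKernel, sub_sub_sub_cancel_right,
    mem_sphere_iff_norm.1 (hK hw), Real.norm_eq_abs, abs_div, abs_of_nonneg (sq_nonneg ‖w - z‖)]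
  calc |R ^ 2 - ‖z - c‖ ^ 2| / ‖w - z‖ ^ 2 ≤ |R ^ 2 - ‖z - c‖ ^ 2| / (δ / 2) ^ 2 := by
        gcongr
    _ < ε := by rwa [div_lt_iff₀ (by positivity)]

theorem circleMap_notMem_closure_image_Icc_diff {c : ℂ} {R θ₀ : ℝ} (hR : R ≠ 0) {u : Set ℝ}
    (hu : IsOpen u) (hθ₀ : θ₀ ∈ u) :
    circleMap c R θ₀ ∉ closure (circleMap c R '' (Icc (θ₀ - π) (θ₀ + π) \ u)) := by
  rw [(((isCompact_Icc.diff hu).image (continuous_circleMap c R))).isClosed.closure_eq]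
  rintro ⟨t, ⟨ht, htu⟩, heq⟩
  have hdist : |t - θ₀| < 2 * π := by
    rw [abs_lt]; constructor <;> linarith [ht.1, ht.2, pi_pos]
  exact htu (eq_of_circleMap_eq hR hdist heq ▸ hθ₀)

theorem tendstoUniformlyOn_poissonKernel_circleMap {c : ℂ} {R θ₀ : ℝ} (hR : 0 < R) {u : Set ℝ}
    (hu : IsOpen u) (hθ₀ : θ₀ ∈ u) :
    TendstoUniformlyOn (fun z t => poissonKernel c z (circleMap c R t)) 0
      (𝓝 (circleMap c R θ₀)) (Icc (θ₀ - π) (θ₀ + π) \ u) := by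
  have hsphere : ∀ t, circleMap c R t ∈ sphere c R := circleMap_mem_sphere c hR.le
  exact ((tendstoUniformlyOn_poissonKernel (hsphere θ₀) (image_subset_iff.2 fun t _ => hsphere t)
    (circleMap_notMem_closure_image_Icc_diff hR.ne' hu hθ₀)).comp (circleMap c R)).mono
    (subset_preimage_image _ _)

theorem tendsto_intervalIntegral_poissonKernel_circleMap_smul {E : Type*} [NormedAddCommGroup E]
    [NormedSpace ℝ E] [CompleteSpace E] {g : ℝ → E} {c : ℂ} {R θ₀ : ℝ} (hR : 0 < R)
    (hg : IntervalIntegrable g volume (θ₀ - π) (θ₀ + π)) (hcont : ContinuousAt g θ₀) :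
    Tendsto
      (fun z => (2 * π)⁻¹ • ∫ t in (θ₀ - π)..(θ₀ + π), poissonKernel c z (circleMap c R t) • g t)
      (𝓝[ball c R] circleMap c R θ₀) (𝓝 (g θ₀)) := by
  have hle : θ₀ - π ≤ θ₀ + π := by linarith [pi_pos]
  have hpeak : Tendsto (fun z => ∫ t in Ioc (θ₀ - π) (θ₀ + π),
      ((2 * π)⁻¹ * poissonKernel c z (circleMap c R t)) • g t)
      (𝓝[ball c R] circleMap c R θ₀) (𝓝 (g θ₀)) := by
    apply tendsto_setIntegral_peak_smul_of_integrableOn_of_tendsto (x₀ := θ₀) measurableSet_Ioc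
      measurableSet_Ioc subset_rfl self_mem_nhdsWithin (by simp)
    · filter_upwards [self_mem_nhdsWithin] with z hz t _
      refine mul_nonneg (by positivity) (poissonKernel_nonneg ?_)
      rw [mem_sphere_iff_norm.1 (circleMap_mem_sphere c hR.le t)]
      exact (mem_ball_iff_norm.1 hz).le
    · intro u hu hθ₀u v hv
      have hscaled := ((uniformContinuous_const_smul (2 * π)⁻¹).comp_tendstoUniformlyOn
        (tendstoUniformlyOn_poissonKernel_circleMap (c := c) hR hu hθ₀u)).mono
        (sdiff_subset_sdiff_left Ioc_subset_Icc_self)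
      have hv' := hscaled v hv
      simp only [Function.comp_def, Pi.zero_apply, smul_eq_mul, mul_zero] at hv'
      exact nhdsWithin_le_nhds hv'
    · refine tendsto_const_nhds.congr' ?_
      filter_upwards [self_mem_nhdsWithin] with z hz
      rw [integral_const_mul, ← intervalIntegral.integral_of_le hle,
        show θ₀ + π = θ₀ - π + 2 * π by ring, integral_poissonKernel_circleMap hz]
      field_simp
    · refine Eventually.of_forall fun z => Measurable.aestronglyMeasurable ?_
      unfold poissonKernel
      fun_prop
    · exact (intervalIntegrable_iff_integrableOn_Ioc_of_le hle).1 hg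
    · exact hcont.tendsto.mono_left nhdsWithin_le_nhds
  refine hpeak.congr fun z => ?_
  rw [intervalIntegral.integral_of_le hle, ← integral_smul]
  simp_rw [smul_smul]

/-- Fatou's boundary continuity theorem: if the `2π`-periodic integrable `f` is
continuous at `θ₀`, its Poisson integral `U` tends to `f(θ₀)` as `z → e^{iθ₀}`
unrestrictedly within the open unit disc. -/
theorem stmt_5 (f : ℝ → ℝ) (hper : Function.Periodic f (2 * π))
    (hint : IntervalIntegrable f volume (-π) π)
    (θ₀ : ℝ) (hcont : ContinuousAt f θ₀) :
    Tendsto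
      (fun z : ℂ =>
        (1 / (2 * π)) * ∫ t in (-π)..π, f t * fatouPoissonKernel ‖z‖ (z.arg - t))
      (nhdsWithin (Complex.exp (θ₀ * Complex.I)) {z : ℂ | ‖z‖ < 1})
      (nhds (f θ₀)) := by
  have hf : IntervalIntegrable f volume (θ₀ - π) (θ₀ + π) :=
    hper.intervalIntegrable two_pi_pos.ne' (by rwa [show -π + 2 * π = π by ring]) _ _
  have hlim := tendsto_intervalIntegral_poissonKernel_circleMap_smul (c := 0) one_pos hf hcont
  rw [circleMap_zero, ofReal_one, one_mul, ball_zero_eq] at hlim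
  refine hlim.congr fun z => ?_
  have hperz : Function.Periodic (fun t => poissonKernel 0 z (circleMap 0 1 t) • f t) (2 * π) :=
    fun t => by simp only [periodic_circleMap 0 1 t, hper t]
  rw [show θ₀ + π = θ₀ - π + 2 * π by ring, hperz.intervalIntegral_add_eq (θ₀ - π) (-π),
    show -π + 2 * π = π by ring, one_div]
  simp_rw [fatouPoissonKernel_sub_eq_poissonKernel, norm_mul_exp_arg_mul_I, smul_eq_mul,
    mul_comm (f _)]
end

section
/- (Blaschke condition) Let f be a bounded analytic function on the open unit disc D with f(0) ≠ 0, and let {a_n} be the sequence of zeros of f in D, each repeated according to multiplicity. Then ∑_n (1 − |a_n|) < ∞. -/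
/-!
Jensen's formula on the circle of radius `r < 1` bounds `log ‖f 0‖ + ∑ log (r / ‖u‖)`, the sum
over the zeros `u` with `‖u‖ ≤ r` counted with multiplicity, by the circle average of
`log ‖f‖`, hence by `log⁺ M`. Keeping only finitely many distinct zeros and letting `r → 1`
bounds `∑ log ‖a n‖⁻¹` uniformly, and `1 - ‖a‖ ≤ log ‖a‖⁻¹`.
-/

open Metric Set

open Filter Topology Real MeromorphicOn

theorem AnalyticOnNhd.one_le_divisor {𝕜 E : Type*} [NontriviallyNormedField 𝕜]
    [NormedAddCommGroup E] [NormedSpace 𝕜 E] {f : 𝕜 → E} {U : Set 𝕜} {u : 𝕜}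
    (hf : AnalyticOnNhd 𝕜 f U) (hu : u ∈ U) (hfu : f u = 0)
    (hfin : analyticOrderAt f u ≠ ⊤) :
    1 ≤ divisor f U u := by
  obtain ⟨n, hn⟩ := ENat.ne_top_iff_exists.1 hfin
  have hpos : (n : ℕ∞) ≠ 0 := hn ▸ (hf u hu).analyticOrderAt_ne_zero.2 hfu
  rw [hf.divisor_apply hu, ← hn]
  simp only [ENat.map_natCast, WithTop.untop₀_coe, Nat.one_le_cast]
  exact Nat.one_le_iff_ne_zero.2 (by exact_mod_cast hpos)

lemma Real.log_mul_inv_nonneg {R x : ℝ} (hx : 0 ≤ x) (hxR : x ≤ R) : 0 ≤ log (R * x⁻¹) := by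
  rcases hx.eq_or_lt with rfl | hx
  · simp
  · exact log_nonneg ((one_le_div hx).2 hxR)

theorem AnalyticOnNhd.sum_log_le_of_forall_sphere_norm_le {c : ℂ} {R M : ℝ} {f : ℂ → ℂ}
    (hR : 0 < R) (hf : AnalyticOnNhd ℂ f (closedBall c R)) (hfc : f c ≠ 0)
    (hM : ∀ z ∈ sphere c R, ‖f z‖ ≤ M) {T : Finset ℂ}
    (hT : ∀ u ∈ T, u ∈ closedBall c R ∧ f u = 0) :
    ∑ u ∈ T, Real.log (R * ‖c - u‖⁻¹) ≤ log⁺ M - Real.log ‖f c‖ := by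
  have hf' : AnalyticOnNhd ℂ f (closedBall c |R|) := by rwa [abs_of_pos hR]
  have jensen := hf'.circleAverage_log_norm hR.ne' hfc
  rw [abs_of_pos hR] at jensen
  set D := divisor f (closedBall c R)
  set L : ℂ → ℝ := fun u ↦ Real.log (R * ‖c - u‖⁻¹)
  have hL : ∀ u ∈ closedBall c R, 0 ≤ L u := fun u hu ↦
    log_mul_inv_nonneg (norm_nonneg _) (by rwa [mem_closedBall, dist_eq_norm'] at hu)
  have hDL : ∀ u, 0 ≤ D u * L u := by
    intro u
    by_cases hu : u ∈ closedBall c R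
    · exact mul_nonneg (mod_cast hf.divisor_nonneg u) (hL u hu)
    · simp [D, hu]
  have hfin : ∀ u ∈ closedBall c R, analyticOrderAt f u ≠ ⊤ := fun u hu ↦
    hf.analyticOrderAt_ne_top_of_isPreconnected (convex_closedBall c R).isPreconnected
      (mem_closedBall_self hR.le) hu
      ((hf c (mem_closedBall_self hR.le)).analyticOrderAt_eq_zero.2 hfc ▸ ENat.zero_ne_top)
  have hsupp : D.support.Finite := D.finiteSupport (isCompact_closedBall c R)
  -- `log⁺ M` rather than `log M`: at a zero of `f` on the circle, `log ‖f z‖ = log 0 = 0`.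
  have average_le : circleAverage (Real.log ‖f ·‖) c R ≤ log⁺ M := by
    refine circleAverage_mono_on_of_le_circle
      (hf'.mono sphere_subset_closedBall).meromorphicOn.circleIntegrable_log_norm
      fun z hz ↦ ?_
    rw [abs_of_pos hR] at hz
    exact (le_max_right _ _).trans (posLog_le_posLog (norm_nonneg _) (hM z hz))
  have sum_le_finsum : ∑ u ∈ T, L u ≤ ∑ᶠ u, D u * L u := by
    classical
    rw [finsum_eq_sum_of_support_subset (s := T ∪ hsupp.toFinset) _ fun u hu ↦
      Finset.mem_union_right _ (hsupp.mem_toFinset.2 fun hD ↦ hu (by simp [hD]))]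
    calc ∑ u ∈ T, L u ≤ ∑ u ∈ T, D u * L u := by
          refine Finset.sum_le_sum fun u hu ↦ le_mul_of_one_le_left (hL u (hT u hu).1) ?_
          exact_mod_cast hf.one_le_divisor (hT u hu).1 (hT u hu).2 (hfin u (hT u hu).1)
      _ ≤ _ := Finset.sum_le_sum_of_subset_of_nonneg Finset.subset_union_left
          fun u _ _ ↦ hDL u
  linarith

theorem DifferentiableOn.sum_log_le_of_forall_ball_norm_le {c : ℂ} {R M : ℝ} {f : ℂ → ℂ}
    (hR : 0 < R) (hf : DifferentiableOn ℂ f (ball c R)) (hfc : f c ≠ 0)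
    (hM : ∀ z ∈ ball c R, ‖f z‖ ≤ M) {T : Finset ℂ}
    (hT : ∀ u ∈ T, u ∈ ball c R ∧ f u = 0) :
    ∑ u ∈ T, Real.log (R * ‖c - u‖⁻¹) ≤ log⁺ M - Real.log ‖f c‖ := by
  have hana : AnalyticOnNhd ℂ f (ball c R) := hf.analyticOnNhd isOpen_ball
  have eventually_le : ∀ᶠ r in 𝓝[<] R,
      ∑ u ∈ T, Real.log (r * ‖c - u‖⁻¹) ≤ log⁺ M - Real.log ‖f c‖ := by
    have hT_mem : ∀ᶠ r in 𝓝[<] R, ∀ u ∈ T, u ∈ closedBall c r :=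
      (eventually_all_finset T).2 fun u hu ↦
        eventually_of_mem (Ioo_mem_nhdsLT (mem_ball.1 (hT u hu).1)) fun r hr ↦
          mem_closedBall.2 hr.1.le
    filter_upwards [Ioo_mem_nhdsLT hR, hT_mem] with r ⟨hr0, hrR⟩ hTr
    have hsub : closedBall c r ⊆ ball c R := closedBall_subset_ball hrR
    exact (hana.mono hsub).sum_log_le_of_forall_sphere_norm_le hr0 hfc
      (fun z hz ↦ hM z (hsub (sphere_subset_closedBall hz))) fun u hu ↦ ⟨hTr u hu, (hT u hu).2⟩
  have tendsto_sum : Tendsto (fun r ↦ ∑ u ∈ T, Real.log (r * ‖c - u‖⁻¹)) (𝓝[<] R)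
      (𝓝 (∑ u ∈ T, Real.log (R * ‖c - u‖⁻¹))) := by
    refine tendsto_finsetSum _ fun u hu ↦
      ((tendsto_nhdsWithin_of_tendsto_nhds tendsto_id).mul_const _).log ?_
    have hu : u ≠ c := fun h ↦ hfc (h ▸ (hT u hu).2)
    exact mul_ne_zero hR.ne' (inv_ne_zero (norm_ne_zero_iff.2 (sub_ne_zero.2 hu.symm)))
  exact le_of_tendsto tendsto_sum eventually_le

/-- Blaschke condition: the (distinct) zeros `a n` of a bounded analytic
function `f` on the unit disc with `f 0 ≠ 0` satisfy `∑ (1 - |a n|) < ∞`. -/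
theorem stmt_7 (f : ℂ → ℂ) (hd : DifferentiableOn ℂ f (ball (0 : ℂ) 1))
    (hb : ∃ M : ℝ, ∀ z ∈ ball (0 : ℂ) 1, ‖f z‖ ≤ M)
    (h0 : f 0 ≠ 0)
    (a : ℕ → ℂ) (ha : ∀ n, a n ∈ ball (0 : ℂ) 1) (hz : ∀ n, f (a n) = 0)
    (hinj : Function.Injective a) :
    Summable (fun n => 1 - ‖a n‖) := by
  obtain ⟨M, hM⟩ := hb
  have ha0 : ∀ n, a n ≠ 0 := fun n h ↦ h0 (h ▸ hz n)
  refine summable_of_sum_le (c := log⁺ M - Real.log ‖f 0‖)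
    (fun n ↦ sub_nonneg.2 (mem_ball_zero_iff.1 (ha n)).le) fun s ↦ ?_
  classical
  calc ∑ n ∈ s, (1 - ‖a n‖) ≤ ∑ n ∈ s, Real.log (1 * ‖0 - a n‖⁻¹) :=
        Finset.sum_le_sum fun n _ ↦ by
          simpa using one_sub_inv_le_log_of_pos (inv_pos.2 (norm_pos_iff.2 (ha0 n)))
    _ = ∑ u ∈ s.image a, Real.log (1 * ‖0 - u‖⁻¹) := by
          rw [Finset.sum_image fun _ _ _ _ h ↦ hinj h]
    _ ≤ log⁺ M - Real.log ‖f 0‖ :=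
        hd.sum_log_le_of_forall_ball_norm_le one_pos h0 hM fun u hu ↦ by
          obtain ⟨n, -, rfl⟩ := Finset.mem_image.1 hu
          exact ⟨ha n, hz n⟩
end

section
/- Let {f_n} be a pointwise convergent sequence of continuous functions on the unit circle T (or any complete metric space without isolated points), with pointwise limit f. Then the set of points of continuity of f is dense in T. In particular, f is continuous at some point of every nonempty open arc. -/
open Filter

/-- Baire's theorem on functions of the first class: the pointwise limit of a
sequence of continuous functions on a complete metric space is continuous on a
dense set of points. -/
theorem stmt_13 {X : Type*} [MetricSpace X] [CompleteSpace X]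
    (f : ℕ → X → ℝ) (hf : ∀ n, Continuous (f n)) (g : X → ℝ)
    (hlim : ∀ x, Tendsto (fun n => f n x) atTop (nhds (g x))) :
    Dense {x : X | ContinuousAt g x} := by
  have key : ∀ ε : ℝ, 0 < ε → ∃ U : Set X, IsOpen U ∧ Dense U ∧
      ∀ x ∈ U, ∀ᶠ y in nhds x, dist (g y) (g x) ≤ 3 * ε := by
    intro ε hε
    set F : ℕ → Set X := fun N => {x | ∀ m ≥ N, ∀ n ≥ N, dist (f m x) (f n x) ≤ ε} with hF
    have hFc : ∀ N, IsClosed (F N) := by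
      intro N
      have : F N = ⋂ (m : ℕ) (_ : m ≥ N) (n : ℕ) (_ : n ≥ N),
          {x | dist (f m x) (f n x) ≤ ε} := by
        ext x; simp [hF]
      rw [this]
      refine isClosed_iInter fun m => isClosed_iInter fun _ =>
        isClosed_iInter fun n => isClosed_iInter fun _ => ?_
      exact isClosed_le (by continuity) continuous_const
    have hFU : ⋃ N, F N = Set.univ := by
      ext x
      simp only [Set.mem_iUnion, Set.mem_univ, iff_true]
      obtain ⟨N, hN⟩ := Metric.cauchySeq_iff.mp (hlim x).cauchySeq ε hε
      exact ⟨N, fun m hm n hn => (hN m hm n hn).le⟩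
    refine ⟨⋃ N, interior (F N), isOpen_iUnion fun _ => isOpen_interior,
      dense_iUnion_interior_of_closed hFc hFU, ?_⟩
    intro x hx
    obtain ⟨N, hxN⟩ := Set.mem_iUnion.mp hx
    have hg : ∀ y ∈ F N, dist (g y) (f N y) ≤ ε := by
      intro y hy
      refine le_of_tendsto ((hlim y).dist tendsto_const_nhds) ?_
      filter_upwards [eventually_ge_atTop N] with n hn
      exact hy n hn N le_rfl
    have h1 : ∀ᶠ y in nhds x, y ∈ interior (F N) :=
      isOpen_interior.mem_nhds hxN
    have h2 : ∀ᶠ y in nhds x, dist (f N y) (f N x) < ε :=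
      Metric.tendsto_nhds.mp ((hf N).tendsto x) ε hε
    filter_upwards [h1, h2] with y hy1 hy2
    have hyF : y ∈ F N := interior_subset hy1
    have hxF : x ∈ F N := interior_subset hxN
    calc dist (g y) (g x)
        ≤ dist (g y) (f N y) + dist (f N y) (f N x) + dist (f N x) (g x) :=
          dist_triangle4 _ _ _ _
      _ ≤ ε + ε + ε := by
          have := hg y hyF
          have := hg x hxF
          rw [dist_comm (f N x) (g x)]
          gcongr
      _ = 3 * ε := by ring
  have hpos : ∀ k : ℕ, (0:ℝ) < 1 / (k + 1) := fun k => by positivity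
  choose U hUo hUd hU using fun k : ℕ => key (1 / (k + 1)) (hpos k)
  have hdense : Dense (⋂ k, U k) := dense_iInter_of_isOpen hUo hUd
  refine hdense.mono fun x hx => ?_
  simp only [Set.mem_setOf_eq]
  rw [Metric.continuousAt_iff']
  intro ε hε
  obtain ⟨k, hk⟩ := exists_nat_one_div_lt (show (0:ℝ) < ε / 3 by linarith)
  have hxU : x ∈ U k := Set.mem_iInter.mp hx k
  filter_upwards [hU k x hxU] with y hy
  calc dist (g y) (g x) ≤ 3 * (1 / (k + 1)) := hy
    _ < 3 * (ε / 3) := by have := hk; linarith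
    _ = ε := by ring
end

section
/- Let E ⊂ T and suppose B is a Blaschke product with zero set A ⊂ D such that the radial limit B(e^{iθ}) = lim_{r→1} B(re^{iθ}) exists (with modulus one) at every point of T, and E = A' is the set of accumulation points of A on T. Then E is closed and nowhere dense in T. -/
/-!
If the zeros accumulated on a whole arc of the circle, Baire's theorem would give a subarc `J` and
an index `N` such that no zero `a n` with `n ≥ N` lies in the cone `‖w - ζ‖ < 2 (1 - ‖w‖)` at any
`ζ ∈ J`: at every `ζ`, the radial limit has modulus one, while on a zero in the cone the Blaschke
factor at `‖a n‖ ζ`, and with it the whole product, has modulus at most `19/20`. But the zeros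
accumulate at points of `J`, and then the radial projection `a n / ‖a n‖` of a late zero lies in
`J`, with `a n` inside the cone at it.
-/

open Metric Filter Complex Set

/-- The Blaschke product with zero sequence `a`. -/
noncomputable def blaschkeProduct (a : ℕ → ℂ) (z : ℂ) : ℂ :=
  ∏' n, ((starRingEnd ℂ) (a n) / (‖a n‖ : ℂ)) *
    ((a n - z) / (1 - (starRingEnd ℂ) (a n) * z))

open Topology ComplexConjugate

noncomputable def blaschkeFactor (a z : ℂ) : ℂ :=
  (conj a / (‖a‖ : ℂ)) * ((a - z) / (1 - conj a * z))

theorem blaschkeProduct_eq_tprod (a : ℕ → ℂ) (z : ℂ) :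
    blaschkeProduct a z = ∏' n, blaschkeFactor (a n) z := rfl

section BlaschkeFactor

variable {a z : ℂ}

theorem normSq_one_sub_conj_mul (a z : ℂ) :
    normSq (1 - conj a * z) = (1 - normSq a) * (1 - normSq z) + normSq (a - z) := by
  simp only [normSq_apply, sub_re, sub_im, mul_re, mul_im, one_re, one_im, conj_re, conj_im]
  ring

theorem norm_blaschkeFactor (ha : a ≠ 0) :
    ‖blaschkeFactor a z‖ = ‖a - z‖ / ‖1 - conj a * z‖ := by
  simp [blaschkeFactor, ha]

theorem norm_blaschkeFactor_le_one (ha : a ≠ 0) (ha1 : ‖a‖ ≤ 1) (hz : ‖z‖ ≤ 1) :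
    ‖blaschkeFactor a z‖ ≤ 1 := by
  rw [norm_blaschkeFactor ha]
  refine div_le_one_of_le₀ ?_ (norm_nonneg _)
  rw [norm_def, norm_def, normSq_one_sub_conj_mul]
  simp only [normSq_eq_norm_sq]
  refine Real.sqrt_le_sqrt (le_add_of_nonneg_left (mul_nonneg ?_ ?_)) <;>
    nlinarith [norm_nonneg a, norm_nonneg z]

theorem norm_blaschkeFactor_sub_one_le (ha : a ≠ 0) (ha1 : ‖a‖ ≤ 1) (hz : ‖z‖ < 1) :
    ‖blaschkeFactor a z - 1‖ ≤ 2 / (1 - ‖z‖) * (1 - ‖a‖) := by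
  set s := ‖a‖ with hs
  have hs0 : 0 < s := norm_pos_iff.2 ha
  have hden : 1 - ‖z‖ ≤ ‖1 - conj a * z‖ := by
    calc 1 - ‖z‖ ≤ 1 - ‖conj a * z‖ := by
          rw [norm_mul, norm_conj]; nlinarith [norm_nonneg z]
      _ ≤ ‖1 - conj a * z‖ := by simpa using norm_sub_norm_le (1 : ℂ) (conj a * z)
  have hden0 : 1 - conj a * z ≠ 0 := norm_pos_iff.1 (by linarith)
  have hsC : (s : ℂ) ≠ 0 := by exact_mod_cast hs0.ne'
  have hconj : conj a * a = (s : ℂ) ^ 2 := by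
    rw [← normSq_eq_conj_mul_self, normSq_eq_norm_sq, hs]; push_cast; rfl
  have key : blaschkeFactor a z - 1 =
      ((s : ℂ) - 1) * (s + conj a * z) / (s * (1 - conj a * z)) := by
    rw [blaschkeFactor, ← hs]
    field_simp
    linear_combination hconj
  have hnum : ‖(s : ℂ) + conj a * z‖ ≤ 2 * s := by
    calc ‖(s : ℂ) + conj a * z‖ ≤ s + s * ‖z‖ := by
          simpa [norm_mul, abs_of_pos hs0] using norm_add_le (s : ℂ) (conj a * z)
      _ ≤ 2 * s := by nlinarith
  have h1s : ‖(s : ℂ) - 1‖ = 1 - s := by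
    rw [← ofReal_one, ← ofReal_sub, norm_real, Real.norm_of_nonpos (by linarith), neg_sub]
  have hz1 : 0 < 1 - ‖z‖ := by linarith
  rw [key, norm_div, norm_mul, norm_mul, h1s, norm_real, Real.norm_of_nonneg hs0.le,
    div_le_iff₀ (by positivity)]
  calc (1 - s) * ‖(s : ℂ) + conj a * z‖ ≤ (1 - s) * (2 * s) := by gcongr
    _ = 2 / (1 - ‖z‖) * (1 - s) * (s * (1 - ‖z‖)) := by field_simp
    _ ≤ 2 / (1 - ‖z‖) * (1 - s) * (s * ‖1 - conj a * z‖) := by gcongr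

theorem norm_blaschkeFactor_sq_le_of_norm_eq (ha : a ≠ 0) (hz : ‖z‖ = ‖a‖)
    (hclose : ‖a - z‖ ≤ 3 * (1 - ‖a‖)) : ‖blaschkeFactor a z‖ ^ 2 ≤ 9 / 10 := by
  have h1a : 0 ≤ 1 - ‖a‖ := by linarith [norm_nonneg (a - z)]
  rw [norm_blaschkeFactor ha, div_pow, Complex.sq_norm, Complex.sq_norm, normSq_one_sub_conj_mul]
  simp only [normSq_eq_norm_sq, hz]
  refine div_le_of_le_mul₀ (add_nonneg (mul_self_nonneg _) (sq_nonneg _)) (by norm_num) ?_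
  have hq : ‖a - z‖ ^ 2 ≤ 9 * (1 - ‖a‖) ^ 2 := by nlinarith [norm_nonneg (a - z)]
  nlinarith [norm_nonneg a, mul_nonneg h1a h1a]

end BlaschkeFactor

theorem Multipliable.norm_tprod_le_of_norm_le_one {ι R : Type*} [NormedCommRing R]
    [NormOneClass R] {f : ι → R} (hf : Multipliable f) (h1 : ∀ i, ‖f i‖ ≤ 1) (k : ι) :
    ‖∏' i, f i‖ ≤ ‖f k‖ := by
  classical
  refine le_of_tendsto ((continuous_norm.tendsto _).comp hf.hasProd)
    (eventually_atTop.2 ⟨{k}, fun s hs => ?_⟩)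
  show ‖∏ i ∈ s, f i‖ ≤ ‖f k‖
  rw [← Finset.mul_prod_erase s f (Finset.singleton_subset_iff.1 hs)]
  calc ‖f k * ∏ i ∈ s.erase k, f i‖ ≤ ‖f k‖ * ‖∏ i ∈ s.erase k, f i‖ := norm_mul_le _ _
    _ ≤ ‖f k‖ * 1 := by
        gcongr
        exact (Finset.norm_prod_le _ _).trans
          (Finset.prod_le_one (fun _ _ => norm_nonneg _) fun i _ => h1 i)
    _ = ‖f k‖ := mul_one _

section BlaschkeProduct

variable {a : ℕ → ℂ} {z : ℂ}

theorem multipliable_blaschkeFactor (ha : ∀ n, ‖a n‖ ≤ 1) (ha0 : ∀ n, a n ≠ 0)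
    (hsum : Summable fun n => 1 - ‖a n‖) (hz : ‖z‖ < 1) :
    Multipliable fun n => blaschkeFactor (a n) z := by
  have hbound : Summable fun n => ‖blaschkeFactor (a n) z - 1‖ :=
    (hsum.mul_left (2 / (1 - ‖z‖))).of_nonneg_of_le (fun _ => norm_nonneg _)
      fun n => norm_blaschkeFactor_sub_one_le (ha0 n) (ha n) hz
  simpa using multipliable_one_add_of_summable hbound

theorem norm_blaschkeProduct_le_norm_blaschkeFactor (ha : ∀ n, ‖a n‖ ≤ 1) (ha0 : ∀ n, a n ≠ 0)
    (hsum : Summable fun n => 1 - ‖a n‖) (hz : ‖z‖ < 1) (k : ℕ) :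
    ‖blaschkeProduct a z‖ ≤ ‖blaschkeFactor (a k) z‖ := by
  rw [blaschkeProduct_eq_tprod]
  exact (multipliable_blaschkeFactor ha ha0 hsum hz).norm_tprod_le_of_norm_le_one
    (fun n => norm_blaschkeFactor_le_one (ha0 n) (ha n) hz.le) k

theorem eventually_two_mul_one_sub_norm_le_of_tendsto (ha : ∀ n, ‖a n‖ < 1)
    (ha0 : ∀ n, a n ≠ 0) (hsum : Summable fun n => 1 - ‖a n‖) {ζ d : ℂ} (hζ : ‖ζ‖ = 1)
    (hd : ‖d‖ = 1) (hlim : Tendsto (fun r : ℝ => blaschkeProduct a (r * ζ)) (𝓝[<] 1) (𝓝 d)) :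
    ∀ᶠ n in atTop, 2 * (1 - ‖a n‖) ≤ ‖a n - ζ‖ := by
  have hnorm : Tendsto (fun n => ‖a n‖) atTop (𝓝[<] 1) := by
    refine tendsto_nhdsWithin_iff.2 ⟨?_, .of_forall ha⟩
    simpa using (tendsto_const_nhds (x := (1 : ℝ))).sub hsum.tendsto_atTop_zero
  have hlarge : ∀ᶠ n in atTop, 19 / 20 < ‖blaschkeProduct a (‖a n‖ * ζ)‖ :=
    (hlim.comp hnorm).norm.eventually (lt_mem_nhds (by rw [hd]; norm_num))
  filter_upwards [hlarge] with n hn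
  by_contra! hcone
  have hz : ‖(‖a n‖ : ℂ) * ζ‖ = ‖a n‖ := by simp [hζ]
  have hclose : ‖a n - ‖a n‖ * ζ‖ ≤ 3 * (1 - ‖a n‖) := by
    calc ‖a n - ‖a n‖ * ζ‖ ≤ ‖a n - ζ‖ + ‖ζ - ‖a n‖ * ζ‖ := norm_sub_le_norm_sub_add_norm_sub _ _ _
      _ = ‖a n - ζ‖ + (1 - ‖a n‖) := by
          rw [← one_sub_mul, norm_mul, hζ, mul_one, ← ofReal_one, ← ofReal_sub, norm_real,
            Real.norm_of_nonneg (by linarith [ha n])]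
      _ ≤ 3 * (1 - ‖a n‖) := by linarith
  have hB := norm_blaschkeProduct_le_norm_blaschkeFactor (fun n => (ha n).le) ha0 hsum
    (hz.trans_lt (ha n)) n
  have hb := norm_blaschkeFactor_sq_le_of_norm_eq (ha0 n) hz hclose
  nlinarith [norm_nonneg (blaschkeFactor (a n) (‖a n‖ * ζ))]

end BlaschkeProduct

theorem IsOpen.exists_inter_interior_nonempty_of_subset_iUnion {X ι : Type*}
    [TopologicalSpace X] [BaireSpace X] [Countable ι] {T : Set X} (hT : IsOpen T)
    (hne : T.Nonempty) {C : ι → Set X} (hC : ∀ i, IsClosed (C i)) (hcover : T ⊆ ⋃ i, C i) :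
    ∃ i, (T ∩ interior (C i)).Nonempty := by
  obtain ⟨i₀, -⟩ := mem_iUnion.1 (hcover hne.some_mem)
  have hunion : ⋃ i, (C i ∪ Tᶜ) = univ := by
    refine eq_univ_of_forall fun x => ?_
    by_cases hx : x ∈ T
    · obtain ⟨i, hi⟩ := mem_iUnion.1 (hcover hx)
      exact mem_iUnion.2 ⟨i, .inl hi⟩
    · exact mem_iUnion.2 ⟨i₀, .inr hx⟩
  obtain ⟨x, hxT, hx⟩ := (dense_iUnion_interior_of_closed
    (fun i => (hC i).union hT.isClosed_compl) hunion).inter_open_nonempty T hT hne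
  obtain ⟨i, hi⟩ := mem_iUnion.1 hx
  have hsub : interior (C i ∪ Tᶜ) ∩ T ⊆ C i := fun y hy =>
    (interior_subset hy.1).resolve_right (not_not.2 hy.2)
  exact ⟨i, x, hxT, interior_maximal hsub (isOpen_interior.inter hT) ⟨hi, hxT⟩⟩

theorem mapClusterPt_atTop_of_mem_closure_range {X : Type*} [TopologicalSpace X] [T1Space X]
    {u : ℕ → X} {x : X} (hx : x ∈ closure (range u)) (hxu : x ∉ range u) :
    MapClusterPt x atTop u := by
  refine mapClusterPt_atTop_iff_forall_mem_closure.2 fun N => ?_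
  have hsplit : range u = u '' Iio N ∪ u '' Ici N := by
    rw [← image_union, Iio_union_Ici, image_univ]
  rw [hsplit, closure_union, ((finite_Iio N).image u).isClosed.closure_eq] at hx
  exact hx.resolve_left fun h => hxu (image_subset_range _ _ h)

theorem norm_sub_div_norm {w : ℂ} (hw : w ≠ 0) : ‖w - w / ‖w‖‖ = |‖w‖ - 1| := by
  have hw' : ‖w‖ ≠ 0 := norm_ne_zero_iff.2 hw
  have hwC : (‖w‖ : ℂ) ≠ 0 := ofReal_ne_zero.2 hw'
  have hscale : w - w / ‖w‖ = (((‖w‖ - 1) / ‖w‖ : ℝ) : ℂ) * w := by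
    push_cast
    field_simp
  rw [hscale, norm_mul, norm_real, Real.norm_eq_abs, abs_div, abs_norm, div_mul_cancel₀ _ hw']

theorem frequently_div_norm_mem_of_mem_closure_range {a : ℕ → ℂ} (ha : ∀ n, ‖a n‖ < 1)
    {ζ : ℂ} (hζ : ‖ζ‖ = 1) (hmem : ζ ∈ closure (range a)) {O : Set ℂ} (hO : O ∈ 𝓝 ζ) :
    ∃ᶠ n in atTop, a n / ‖a n‖ ∈ O := by
  have hcluster := mapClusterPt_atTop_of_mem_closure_range hmem
    (by rintro ⟨n, rfl⟩; exact (ha n).ne hζ)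
  have hcont : ContinuousAt (fun w : ℂ => w / ‖w‖) ζ :=
    continuousAt_id.div (continuous_ofReal.comp continuous_norm).continuousAt
      (by simp [hζ])
  have := hcluster.continuousAt_comp hcont
  simp only [hζ, ofReal_one, div_one] at this
  exact mapClusterPt_iff_frequently.1 this O hO

/-- If a Blaschke product has radial limits of modulus one at every point of the
unit circle, then the set `E = A'` of accumulation points on `T` of its zero set
is closed and nowhere dense in `T`. -/
theorem stmt_14 (a : ℕ → ℂ) (ha : ∀ n, a n ∈ ball (0 : ℂ) 1) (ha0 : ∀ n, a n ≠ 0)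
    (hsum : Summable (fun n => 1 - ‖a n‖))
    (hrad : ∀ θ : ℝ, ∃ d : ℂ, ‖d‖ = 1 ∧
      Tendsto (fun r : ℝ => blaschkeProduct a ((r : ℂ) * Complex.exp (θ * Complex.I)))
        (nhdsWithin 1 (Iio 1)) (nhds d))
    (E : Set ℂ)
    (hE : E = {ζ : ℂ | ‖ζ‖ = 1 ∧ ζ ∈ closure (Set.range a)}) :
    IsClosed E ∧
      ∀ U : Set ℂ, IsOpen U → (U ∩ {ζ : ℂ | ‖ζ‖ = 1}).Nonempty →
        ((U ∩ {ζ : ℂ | ‖ζ‖ = 1}) \ E).Nonempty := by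
  have ha1 : ∀ n, ‖a n‖ < 1 := fun n => mem_ball_zero_iff.1 (ha n)
  subst hE
  refine ⟨(isClosed_eq continuous_norm continuous_const).inter isClosed_closure, ?_⟩
  rintro U hU ⟨ζ₀, hζ₀U, hζ₀⟩
  by_contra! hsub
  rw [sdiff_eq_empty] at hsub
  let C : ℕ → Set Circle := fun N => {z | ∀ n ≥ N, 2 * (1 - ‖a n‖) ≤ ‖a n - z‖}
  have hC : ∀ N, IsClosed (C N) := fun N => by
    simp only [C, ofPred_forall]
    exact isClosed_iInter fun n => isClosed_iInter fun _ => isClosed_le continuous_const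
      (continuous_const.sub continuous_subtype_val).norm
  have hcover : {z : Circle | (z : ℂ) ∈ U} ⊆ ⋃ N, C N := fun z _ => by
    obtain ⟨d, hd, hlim⟩ := hrad (arg z)
    rw [← Circle.coe_exp, Circle.exp_arg] at hlim
    exact mem_iUnion.2 (eventually_atTop.1
      (eventually_two_mul_one_sub_norm_le_of_tendsto ha1 ha0 hsum z.norm_coe hd hlim))
  obtain ⟨N, z, hzU, hzC⟩ :=
    (hU.preimage continuous_subtype_val).exists_inter_interior_nonempty_of_subset_iUnion
      ⟨⟨ζ₀, mem_sphere_zero_iff_norm.2 hζ₀⟩, hζ₀U⟩ hC hcover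
  have hz : (z : ℂ) ∈ closure (range a) := (hsub ⟨hzU, Circle.norm_coe z⟩).2
  obtain ⟨O, hO, hOC⟩ := (mem_nhds_subtype _ _ _).1 (mem_interior_iff_mem_nhds.1 hzC)
  obtain ⟨n, hnN, hnO⟩ := ((eventually_ge_atTop N).and_frequently
    (frequently_div_norm_mem_of_mem_closure_range ha1 (Circle.norm_coe z) hz hO)).exists
  have hcone := hOC (a := ⟨a n / ‖a n‖, mem_sphere_zero_iff_norm.2 (by simp [ha0 n])⟩) hnO n hnN
  rw [norm_sub_div_norm (ha0 n), abs_sub_comm, abs_of_pos (sub_pos.2 (ha1 n))] at hcone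
  linarith [ha1 n]
end

section
/- (Union of disjoint Arakeljan sets, plane case) If E and F are disjoint closed Arakeljan sets in ℂ (i.e., closed sets such that ℂ* \ E and ℂ* \ F are connected and locally connected at ∞, where ℂ* is the one-point compactification), then E ∪ F is again an Arakeljan set. -/
open Set Bornology

/-- A closed set `S ⊆ ℂ` is an Arakeljan set if every connected component of its
complement is unbounded (no holes), and for every compact connected `K` the
union of the bounded components of `ℂ \ (S ∪ K)` is bounded. -/
def ArakelyanSet (S : Set ℂ) : Prop :=
  IsClosed S ∧
  (∀ z ∉ S, ¬ IsBounded (connectedComponentIn Sᶜ z)) ∧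
  (∀ K : Set ℂ, IsCompact K → IsConnected K →
    IsBounded (⋃ z ∈ {z : ℂ | z ∉ S ∪ K ∧ IsBounded (connectedComponentIn (S ∪ K)ᶜ z)},
      connectedComponentIn (S ∪ K)ᶜ z))

open Metric Complex

/-!
A bounded component `C` of `ℂ \ (E ∪ F ∪ K)`, with `K` compact and connected (or empty), is
contained in a bounded component of `ℂ \ (E ∪ K)` or of `ℂ \ (F ∪ K)`. Otherwise the compact
sets `M₁ = (E ∩ C̄) ∪ K` and `M₂ = (F ∩ C̄) ∪ K`, which meet exactly in `K`, would each fail to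
separate a point of `C` from a far point `b`, so by Janiszewski's theorem their union would not
separate them either; but `C` is still a component of `ℂ \ (M₁ ∪ M₂)`.

Janiszewski's theorem comes from Eilenberg's criterion: for compact `M`, the points `a, b ∉ M` lie
in the same component of `ℂ \ M` iff `(z - a) / (z - b)` has a continuous logarithm on `M`, and
continuous logarithms on `M₁` and `M₂` glue along the connected set `M₁ ∩ M₂`.
-/

section Components

variable {X : Type*} [TopologicalSpace X] [LocallyConnectedSpace X]

theorem closure_connectedComponentIn_inter_subset {U : Set X} (hU : IsOpen U) (x : X) :
    closure (connectedComponentIn U x) ∩ U ⊆ connectedComponentIn U x := by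
  rintro y ⟨hyc, hyU⟩
  obtain ⟨w, hwy, hwx⟩ := mem_closure_iff.mp hyc _ (hU.connectedComponentIn (x := y))
    (mem_connectedComponentIn hyU)
  rw [connectedComponentIn_eq hwx, ← connectedComponentIn_eq hwy]
  exact mem_connectedComponentIn hyU

theorem connectedComponentIn_compl_eq_of_inter_closure_subset {S T : Set X} (hS : IsClosed S)
    (hT : IsClosed T) (hTS : T ⊆ S) {z : X} (hz : z ∉ S)
    (hST : S ∩ closure (connectedComponentIn Sᶜ z) ⊆ T) :
    connectedComponentIn Tᶜ z = connectedComponentIn Sᶜ z := by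
  set C := connectedComponentIn Sᶜ z
  have hzT : z ∈ Tᶜ := fun h => hz (hTS h)
  refine subset_antisymm ?_ (isPreconnected_connectedComponentIn.subset_connectedComponentIn
    (mem_connectedComponentIn hz)
    ((connectedComponentIn_subset _ _).trans (compl_subset_compl.mpr hTS)))
  have hcover : connectedComponentIn Tᶜ z ⊆ C ∪ (Tᶜ \ closure C) := by
    intro w hw
    have hwT : w ∈ Tᶜ := connectedComponentIn_subset _ _ hw
    by_cases hwC : w ∈ closure C
    · exact Or.inl (closure_connectedComponentIn_inter_subset hS.isOpen_compl z
        ⟨hwC, fun hwS => hwT (hST ⟨hwS, hwC⟩)⟩)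
    · exact Or.inr ⟨hwT, hwC⟩
  exact isPreconnected_connectedComponentIn.subset_left_of_subset_union
    hS.isOpen_compl.connectedComponentIn (hT.isOpen_compl.sdiff isClosed_closure)
    (disjoint_left.mpr fun w hw hw' => hw'.2 (subset_closure hw)) hcover
    ⟨z, mem_connectedComponentIn hzT, mem_connectedComponentIn hz⟩

end Components

section Unbounded

variable {E : Type*} [NormedAddCommGroup E] [NormedSpace ℝ E]

theorem isPreconnected_compl_closedBall (h : 1 < Module.rank ℝ E) (x : E) {r : ℝ}
    (hr : 0 ≤ r) : IsPreconnected (closedBall x r)ᶜ := by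
  have himage :
      (fun p : ℝ × E => x + p.1 • p.2) '' (Ioi r ×ˢ sphere 0 1) = (closedBall x r)ᶜ := by
    ext z
    simp only [mem_image, mem_prod, mem_Ioi, mem_sphere_zero_iff_norm, Prod.exists, mem_compl_iff,
      mem_closedBall, not_le, dist_eq_norm]
    constructor
    · rintro ⟨t, u, ⟨ht, hu⟩, rfl⟩
      rwa [add_sub_cancel_left, norm_smul, hu, mul_one, Real.norm_of_nonneg (hr.trans ht.le)]
    · intro hz
      have hpos : 0 < ‖z - x‖ := hr.trans_lt hz
      refine ⟨‖z - x‖, ‖z - x‖⁻¹ • (z - x), ⟨hz, ?_⟩, ?_⟩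
      · rw [norm_smul, norm_inv, norm_norm, inv_mul_cancel₀ hpos.ne']
      · rw [smul_smul, mul_inv_cancel₀ hpos.ne', one_smul, add_sub_cancel]
  rw [← himage]
  exact (isPreconnected_Ioi.prod (isPreconnected_sphere h 0 1)).image _ (by fun_prop)

theorem compl_closedBall_subset_connectedComponentIn (h : 1 < Module.rank ℝ E) {M : Set E}
    {x : E} {r : ℝ} (hr : 0 ≤ r) (hM : M ⊆ closedBall x r) {z : E}
    (hz : ¬ IsBounded (connectedComponentIn Mᶜ z)) :
    (closedBall x r)ᶜ ⊆ connectedComponentIn Mᶜ z := by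
  obtain ⟨w, hwC, hw⟩ := not_subset.mp fun hsub => hz (isBounded_closedBall.subset hsub)
  rw [connectedComponentIn_eq hwC]
  exact (isPreconnected_compl_closedBall h x hr).subset_connectedComponentIn hw
    (compl_subset_compl.mpr hM)

theorem connectedComponentIn_eq_of_not_isBounded (h : 1 < Module.rank ℝ E) {M : Set E}
    (hM : IsBounded M) {a b : E} (ha : ¬ IsBounded (connectedComponentIn Mᶜ a))
    (hb : ¬ IsBounded (connectedComponentIn Mᶜ b)) :
    connectedComponentIn Mᶜ a = connectedComponentIn Mᶜ b := by
  obtain ⟨r, hr⟩ := hM.subset_closedBall 0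
  set R := max r 0
  have hMR : M ⊆ closedBall 0 R := hr.trans (closedBall_subset_closedBall (le_max_left _ _))
  obtain ⟨w, hwb, hw⟩ := not_subset.mp fun hsub => hb (isBounded_closedBall.subset hsub)
  exact (connectedComponentIn_eq
    (compl_closedBall_subset_connectedComponentIn h (le_max_right r 0) hMR ha hw)).trans
    (connectedComponentIn_eq hwb).symm

end Unbounded

section ContinuousLog

variable {X : Type*} [TopologicalSpace X]

def HasContinuousLogOn (f : X → ℂ) (s : Set X) : Prop :=
  ∃ g : X → ℂ, ContinuousOn g s ∧ ∀ x ∈ s, exp (g x) = f x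

theorem HasContinuousLogOn.congr {f f' : X → ℂ} {s : Set X} (h : HasContinuousLogOn f s)
    (hf : EqOn f f' s) : HasContinuousLogOn f' s := by
  obtain ⟨g, hgc, hg⟩ := h
  exact ⟨g, hgc, fun x hx => (hg x hx).trans (hf hx)⟩

theorem HasContinuousLogOn.mono {f : X → ℂ} {s t : Set X} (h : HasContinuousLogOn f s)
    (hts : t ⊆ s) : HasContinuousLogOn f t := by
  obtain ⟨g, hgc, hg⟩ := h
  exact ⟨g, hgc.mono hts, fun x hx => hg x (hts hx)⟩

theorem HasContinuousLogOn.inv {f : X → ℂ} {s : Set X} (h : HasContinuousLogOn f s) :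
    HasContinuousLogOn (fun x => (f x)⁻¹) s := by
  obtain ⟨g, hgc, hg⟩ := h
  exact ⟨fun x => -g x, hgc.neg, fun x hx => by rw [exp_neg, hg x hx]⟩

theorem hasContinuousLogOn_const {c : ℂ} (hc : c ≠ 0) (s : Set X) :
    HasContinuousLogOn (fun _ => c) s :=
  ⟨fun _ => log c, continuousOn_const, fun _ _ => exp_log hc⟩

theorem IsPreconnected.eq_of_exp_eq {s : Set X} (hs : IsPreconnected s) {g : X → ℂ}
    (hg : ContinuousOn g s) (he : ∀ x ∈ s, ∀ y ∈ s, exp (g x) = exp (g y)) {x y : X}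
    (hx : x ∈ s) (hy : y ∈ s) : g x = g y :=
  isCoveringMap_exp.constOn_of_comp hs hg (fun x hx y hy => Subtype.ext (he x hx y hy)) hx hy

/-- On the preconnected overlap the two logarithms differ by a single constant of `2πiℤ`. -/
theorem HasContinuousLogOn.union {f : X → ℂ} {s t : Set X} (hs : IsClosed s)
    (ht : IsClosed t) (hst : IsPreconnected (s ∩ t)) (h₁ : HasContinuousLogOn f s)
    (h₂ : HasContinuousLogOn f t) : HasContinuousLogOn f (s ∪ t) := by
  classical
  obtain ⟨g₁, hg₁c, hg₁⟩ := h₁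
  obtain ⟨g₂, hg₂c, hg₂⟩ := h₂
  obtain ⟨c, hc, hgc⟩ : ∃ c, exp c = 1 ∧ EqOn g₁ (fun x => g₂ x + c) (s ∩ t) := by
    rcases (s ∩ t).eq_empty_or_nonempty with hempty | ⟨x₀, hx₀⟩
    · exact ⟨0, exp_zero, by simp [hempty]⟩
    have hexp : ∀ x ∈ s ∩ t, exp (g₁ x - g₂ x) = 1 := fun x hx => by
      rw [exp_sub, hg₁ x hx.1, ← hg₂ x hx.2, div_self (exp_ne_zero _)]
    refine ⟨g₁ x₀ - g₂ x₀, hexp x₀ hx₀, fun x hx => ?_⟩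
    have := hst.eq_of_exp_eq (g := fun x => g₁ x - g₂ x)
      ((hg₁c.mono inter_subset_left).sub (hg₂c.mono inter_subset_right))
      (fun x hx y hy => by rw [hexp x hx, hexp y hy]) hx hx₀
    simp only at this ⊢
    linear_combination this
  refine ⟨s.piecewise g₁ (fun x => g₂ x + c), ?_, ?_⟩
  · refine ContinuousOn.union_of_isClosed ?_ ?_ hs ht
    · exact hg₁c.congr fun x hx => piecewise_eq_of_mem _ _ _ hx
    · refine (hg₂c.add (continuousOn_const (c := c))).congr fun x hx => ?_
      by_cases hxs : x ∈ s
      · rw [piecewise_eq_of_mem _ _ _ hxs, hgc ⟨hxs, hx⟩]; rfl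
      · rw [piecewise_eq_of_notMem _ _ _ hxs]; rfl
  · rintro x hx
    by_cases hxs : x ∈ s
    · rw [piecewise_eq_of_mem _ _ _ hxs, hg₁ x hxs]
    · rw [piecewise_eq_of_notMem _ _ _ hxs, exp_add, hc, mul_one,
        hg₂ x (hx.resolve_left hxs)]

/-- Homotopy lifting for the covering map `exp : ℂ → ℂ \ {0}`. -/
theorem HasContinuousLogOn.of_homotopy {H : unitInterval × X → ℂ} {s : Set X}
    (hH : ContinuousOn H (univ ×ˢ s)) (hne : ∀ t, ∀ x ∈ s, H (t, x) ≠ 0)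
    (h₀ : HasContinuousLogOn (fun x => H (0, x)) s) :
    HasContinuousLogOn (fun x => H (1, x)) s := by
  classical
  obtain ⟨g₀, hg₀c, hg₀⟩ := h₀
  let H' : C(unitInterval × s, {z : ℂ // z ≠ 0}) :=
    ⟨fun p => ⟨H (p.1, p.2), hne p.1 p.2 p.2.2⟩,
      (hH.comp_continuous (by fun_prop) fun p => ⟨trivial, p.2.2⟩).subtype_mk _⟩
  let L := isCoveringMap_exp.liftHomotopy H' ⟨s.domRestrict g₀, hg₀c.domRestrict⟩
    fun x => Subtype.ext (hg₀ x x.2).symm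
  refine ⟨fun x => if hx : x ∈ s then L (1, ⟨x, hx⟩) else 0, ?_, fun x hx => ?_⟩
  · rw [continuousOn_iff_continuous_domRestrict]
    refine (L.continuous.comp (Continuous.prodMk_right (1 : unitInterval))).congr fun x => ?_
    simp [x.2]
  · simp only [dif_pos hx]
    exact congr_arg Subtype.val
      (congr_fun (isCoveringMap_exp.liftHomotopy_lifts H' _ _) (1, ⟨x, hx⟩))

end ContinuousLog

theorem Continuous.hasContinuousLogOn_univ {E : Type*} [NormedAddCommGroup E] [NormedSpace ℝ E]
    {f : E → ℂ} (hf : Continuous f) (hne : ∀ x, f x ≠ 0) : HasContinuousLogOn f univ := by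
  have := HasContinuousLogOn.of_homotopy (H := fun p : unitInterval × E => f ((p.1 : ℝ) • p.2))
    (by fun_prop) (fun _ _ _ => hne _) (by simpa using hasContinuousLogOn_const (hne 0) univ)
  simpa using this

theorem not_hasContinuousLogOn_sub_sphere (a : ℂ) {R : ℝ} (hR : 0 < R) :
    ¬ HasContinuousLogOn (fun z => z - a) (sphere a R) := by
  rintro ⟨φ, hφc, hφ⟩
  set κ : ℝ → ℂ := fun θ => a + R * exp (θ * I)
  have hκ : ∀ θ, κ θ ∈ sphere a R := fun θ => by
    simp [κ, abs_of_pos hR]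
  have hexp : ∀ θ : ℝ, exp (φ (κ θ) - θ * I) = R := fun θ => by
    rw [exp_sub, hφ _ (hκ θ)]
    simp [κ]
  have hloop : κ (2 * Real.pi) = κ 0 := by
    simp only [κ, ofReal_mul, ofReal_ofNat, exp_two_pi_mul_I, ofReal_zero, zero_mul, exp_zero]
  have := isPreconnected_univ.eq_of_exp_eq (g := fun θ : ℝ => φ (κ θ) - θ * I)
    ((hφc.comp_continuous (by fun_prop) hκ).sub (by fun_prop)).continuousOn
    (fun x _ y _ => by rw [hexp, hexp]) (mem_univ (2 * Real.pi)) (mem_univ 0)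
  simp only [hloop, ofReal_zero, zero_mul, sub_zero, sub_eq_self, ofReal_mul, ofReal_ofNat] at this
  exact two_pi_I_ne_zero this

theorem hasContinuousLogOn_div_of_mem_connectedComponentIn {M : Set ℂ} (hM : IsClosed M)
    {a b : ℂ} (hb : b ∈ connectedComponentIn Mᶜ a) :
    HasContinuousLogOn (fun z => (z - a) / (z - b)) M := by
  have ha : a ∈ Mᶜ := connectedComponentIn_nonempty_iff.mp ⟨b, hb⟩
  obtain ⟨γ, hγ⟩ := (hM.isOpen_compl.connectedComponentIn.isConnected_iff_isPathConnected.mp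
    (isConnected_connectedComponentIn_iff.mpr ha)).joinedIn a (mem_connectedComponentIn ha) b hb
  have hγM : ∀ t z, z ∈ M → z - γ t ≠ 0 := fun t z hz =>
    sub_ne_zero.mpr fun h => connectedComponentIn_subset _ _ (hγ t) (h ▸ hz)
  have haM : ∀ z ∈ M, z - a ≠ 0 := fun z hz => sub_ne_zero.mpr fun h => ha (h ▸ hz)
  have := HasContinuousLogOn.of_homotopy (s := M)
    (H := fun p : unitInterval × ℂ => (p.2 - a) / (p.2 - γ p.1))
    (by fun_prop (disch := exact fun p hp => hγM p.1 p.2 hp.2))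
    (fun t z hz => div_ne_zero (haM z hz) (hγM t z hz))
    ((hasContinuousLogOn_const one_ne_zero M).congr fun z hz => by simp [div_self (haM z hz)])
  simpa using this

/-- Extend the logarithm by Tietze over the closure `D` of the component of `a`: then
`exp G · (z - b)` on `D` and `z - a` off `D` glue to a nonvanishing function on `ℂ`, whose
logarithm restricts to one of `z - a` on a circle around `D`. -/
theorem not_hasContinuousLogOn_div_of_isBounded {M : Set ℂ} (hM : IsClosed M) {a b : ℂ}
    (ha : a ∉ M) (hb : b ∉ M) (hC : IsBounded (connectedComponentIn Mᶜ a))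
    (hbC : b ∉ connectedComponentIn Mᶜ a) :
    ¬ HasContinuousLogOn (fun z => (z - a) / (z - b)) M := by
  classical
  rintro ⟨g, hgc, hg⟩
  set C := connectedComponentIn Mᶜ a
  set D := closure C
  have hDM : D \ C ⊆ M := fun z hz => by_contra fun hzM =>
    hz.2 (closure_connectedComponentIn_inter_subset hM.isOpen_compl a ⟨hz.1, hzM⟩)
  have hbD : b ∉ D := fun hbD => hbC (by_contra fun hbC => hb (hDM ⟨hbD, hbC⟩))
  have haD : a ∈ D := subset_closure (mem_connectedComponentIn ha)
  obtain ⟨G, hG⟩ := ContinuousMap.exists_restrict_eq hM ⟨M.domRestrict g, hgc.domRestrict⟩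
  have hfrontier : ∀ z ∈ frontier D, exp (G z) * (z - b) = z - a := fun z hz => by
    have hzM : z ∈ M := hDM ⟨isClosed_closure.frontier_subset hz,
      fun hzC => hz.2 (interior_maximal subset_closure hM.isOpen_compl.connectedComponentIn hzC)⟩
    have hGz : G z = g z := congr_arg (· ⟨z, hzM⟩) hG
    rw [hGz, hg z hzM, div_mul_cancel₀ _ (sub_ne_zero.mpr fun h : z = b => hb (h ▸ hzM))]
  set H := D.piecewise (fun z => exp (G z) * (z - b)) (fun z => z - a) with hH
  have hHne : ∀ z, H z ≠ 0 := fun z => by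
    by_cases hz : z ∈ D
    · rw [hH, piecewise_eq_of_mem _ _ _ hz]
      exact mul_ne_zero (exp_ne_zero _) (sub_ne_zero.mpr fun h => hbD (h ▸ hz))
    · rw [hH, piecewise_eq_of_notMem _ _ _ hz]
      exact sub_ne_zero.mpr fun h => hz (h ▸ haD)
  obtain ⟨R, hR, hDR⟩ := hC.closure.subset_ball_lt 0 a
  have hlog : HasContinuousLogOn H univ :=
    (Continuous.piecewise hfrontier (by fun_prop) (by fun_prop)).hasContinuousLogOn_univ hHne
  refine not_hasContinuousLogOn_sub_sphere a hR ((hlog.mono (subset_univ _)).congr fun z hz => ?_)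
  exact piecewise_eq_of_notMem _ _ _ fun hzD => sphere_disjoint_ball.ne_of_mem hz (hDR hzD) rfl

theorem mem_connectedComponentIn_of_hasContinuousLogOn {M : Set ℂ} (hM : IsCompact M) {a b : ℂ}
    (ha : a ∉ M) (hb : b ∉ M) (h : HasContinuousLogOn (fun z => (z - a) / (z - b)) M) :
    b ∈ connectedComponentIn Mᶜ a := by
  by_contra hbC
  by_cases hA : IsBounded (connectedComponentIn Mᶜ a)
  · exact not_hasContinuousLogOn_div_of_isBounded hM.isClosed ha hb hA hbC h
  have haC : a ∉ connectedComponentIn Mᶜ b := fun haC =>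
    hbC (connectedComponentIn_eq haC ▸ mem_connectedComponentIn hb)
  by_cases hB : IsBounded (connectedComponentIn Mᶜ b)
  · exact not_hasContinuousLogOn_div_of_isBounded hM.isClosed hb ha hB haC
      (h.inv.congr fun z _ => inv_div _ _)
  · refine hbC (connectedComponentIn_eq_of_not_isBounded ?_ hM.isBounded hA hB ▸
      mem_connectedComponentIn hb)
    simp

/-- Janiszewski's theorem. -/
theorem mem_connectedComponentIn_compl_union {M₁ M₂ : Set ℂ} (h₁ : IsCompact M₁)
    (h₂ : IsCompact M₂) (h₁₂ : IsPreconnected (M₁ ∩ M₂)) {a b : ℂ} (hb : b ∉ M₁ ∪ M₂)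
    (hb₁ : b ∈ connectedComponentIn M₁ᶜ a) (hb₂ : b ∈ connectedComponentIn M₂ᶜ a) :
    b ∈ connectedComponentIn (M₁ ∪ M₂)ᶜ a := by
  have ha₁ : a ∉ M₁ := connectedComponentIn_nonempty_iff.mp ⟨b, hb₁⟩
  have ha₂ : a ∉ M₂ := connectedComponentIn_nonempty_iff.mp ⟨b, hb₂⟩
  exact mem_connectedComponentIn_of_hasContinuousLogOn (h₁.union h₂) (by simp [ha₁, ha₂]) hb
    ((hasContinuousLogOn_div_of_mem_connectedComponentIn h₁.isClosed hb₁).union h₁.isClosed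
      h₂.isClosed h₁₂ (hasContinuousLogOn_div_of_mem_connectedComponentIn h₂.isClosed hb₂))

theorem isBounded_connectedComponentIn_union_or {A B K : Set ℂ} (hA : IsClosed A)
    (hB : IsClosed B) (hAB : Disjoint A B) (hK : IsCompact K) (hKc : IsPreconnected K) {z : ℂ}
    (hz : z ∉ A ∪ B ∪ K) (hC : IsBounded (connectedComponentIn (A ∪ B ∪ K)ᶜ z)) :
    IsBounded (connectedComponentIn (A ∪ K)ᶜ z) ∨
      IsBounded (connectedComponentIn (B ∪ K)ᶜ z) := by
  set C := connectedComponentIn (A ∪ B ∪ K)ᶜ z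
  set M₁ := A ∩ closure C ∪ K
  set M₂ := B ∩ closure C ∪ K
  have hM₁ : IsCompact M₁ := (isCompact_of_isClosed_isBounded (hA.inter isClosed_closure)
    (hC.closure.subset inter_subset_right)).union hK
  have hM₂ : IsCompact M₂ := (isCompact_of_isClosed_isBounded (hB.inter isClosed_closure)
    (hC.closure.subset inter_subset_right)).union hK
  have hM₁₂ : M₁ ∩ M₂ = K := by
    rw [← inter_union_distrib_right, inter_inter_inter_comm, (hAB.inter_eq), empty_inter,
      empty_union]
  have hCM : connectedComponentIn (M₁ ∪ M₂)ᶜ z = C :=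
    connectedComponentIn_compl_eq_of_inter_closure_subset ((hA.union hB).union hK.isClosed)
      (hM₁.union hM₂).isClosed
      (union_subset (union_subset_union_left K (inter_subset_left.trans subset_union_left))
        (union_subset_union_left K (inter_subset_left.trans subset_union_right))) hz
      fun w ⟨hw, hwC⟩ => by
        rcases hw with (hwA | hwB) | hwK
        exacts [Or.inl (Or.inl ⟨hwA, hwC⟩), Or.inr (Or.inl ⟨hwB, hwC⟩), Or.inl (Or.inr hwK)]
  obtain ⟨r, hr, hCr⟩ := (hC.closure.union hK.isBounded).subset_closedBall_lt 0 0
  obtain ⟨b, hb⟩ := NormedSpace.exists_lt_norm ℝ ℂ r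
  have hbr : b ∉ closedBall 0 r := by simpa using hb
  by_contra! hunb
  have hM₁r : M₁ ⊆ closedBall 0 r := (union_subset_union_left K inter_subset_right).trans hCr
  have hM₂r : M₂ ⊆ closedBall 0 r := (union_subset_union_left K inter_subset_right).trans hCr
  have hfar : ∀ {M S : Set ℂ}, M ⊆ S → M ⊆ closedBall 0 r →
      ¬ IsBounded (connectedComponentIn Sᶜ z) → b ∈ connectedComponentIn Mᶜ z :=
    fun hMS hMr hS => compl_closedBall_subset_connectedComponentIn (by simp) hr.le hMr
      (fun h => hS (h.subset (connectedComponentIn_mono _ (compl_subset_compl.mpr hMS)))) hbr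
  have hb₁ := hfar (union_subset_union_left K inter_subset_left) hM₁r hunb.1
  have hb₂ := hfar (union_subset_union_left K inter_subset_left) hM₂r hunb.2
  have hbC := hCM ▸ mem_connectedComponentIn_compl_union hM₁ hM₂ (hM₁₂ ▸ hKc)
    (fun h => hbr ((union_subset hM₁r hM₂r) h)) hb₁ hb₂
  exact hbr (hCr (Or.inl (subset_closure hbC)))

/-- The union of two disjoint Arakeljan sets in the plane is an Arakeljan set. -/
theorem stmt_18 (E F : Set ℂ) (hE : ArakelyanSet E) (hF : ArakelyanSet F)
    (hdisj : Disjoint E F) : ArakelyanSet (E ∪ F) := by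
  obtain ⟨hEc, hEh, hEK⟩ := hE
  obtain ⟨hFc, hFh, hFK⟩ := hF
  refine ⟨hEc.union hFc, fun z hz hC => ?_, fun K hK hKc => ?_⟩
  · rcases isBounded_connectedComponentIn_union_or hEc hFc hdisj isCompact_empty
      isPreconnected_empty (K := ∅) (by simpa using hz) (by simpa using hC) with h | h
    · exact hEh z (fun h' => hz (Or.inl h')) (by simpa using h)
    · exact hFh z (fun h' => hz (Or.inr h')) (by simpa using h)
  refine ((hEK K hK hKc).union (hFK K hK hKc)).subset (iUnion₂_subset fun z ⟨hz, hC⟩ => ?_)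
  have hzE : z ∉ E ∪ K := fun h => hz (union_subset_union_left K subset_union_left h)
  have hzF : z ∉ F ∪ K := fun h => hz (union_subset_union_left K subset_union_right h)
  rcases isBounded_connectedComponentIn_union_or hEc hFc hdisj hK hKc.isPreconnected hz hC
    with h | h
  · exact subset_union_of_subset_left (subset_iUnion₂_of_subset z ⟨hzE, h⟩
      (connectedComponentIn_mono z (compl_subset_compl.mpr
        (union_subset_union_left K subset_union_left)))) _
  · exact subset_union_of_subset_right (subset_iUnion₂_of_subset z ⟨hzF, h⟩
      (connectedComponentIn_mono z (compl_subset_compl.mpr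
        (union_subset_union_left K subset_union_right)))) _
end

section
/- Let G ⊂ ℂ be a domain with one-point (Alexandroff) compactification G* = G ∪ {∞}, and let F be a relatively closed subset of G. Then G* \ F is connected if and only if every connected component of the open set G \ F is unbounded or has an accumulation point on ∂G. -/
/-!
`G* \ F` is `{∞} ∪ (G \ F)`, and the components of the open set `G \ F` are open in `G*`.
Such a union of a point with an open set is connected iff the point lies in the closure of every
component. Finally `∞` lies in the closure of `C ⊆ G` iff the closure of `C` in `G` is not
compact, i.e. iff `C` is unbounded or its closure in `ℂ` reaches `∂G`.
-/

open Set Bornology Topology OnePoint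

theorem isPreconnected_insert_iff_forall_mem_closure_connectedComponentIn {Y : Type*}
    [TopologicalSpace Y] {U : Set Y} {p : Y} (hU : ∀ y ∈ U, IsOpen (connectedComponentIn U y)) :
    IsPreconnected (insert p U) ↔ ∀ x ∈ U, p ∈ closure (connectedComponentIn U x) := by
  constructor
  · intro h x hx
    by_contra hp
    set C := connectedComponentIn U x with hC
    -- A point of `U` in `closure C` has an open component meeting `C`, so `C` is clopen in `U`.
    have hcover : insert p U ⊆ C ∪ (closure C)ᶜ := by
      rintro y (rfl | hy)
      · exact Or.inr hp
      by_cases hyC : y ∈ closure C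
      · obtain ⟨w, hwy, hwC⟩ :=
          mem_closure_iff.mp hyC _ (hU y hy) (mem_connectedComponentIn hy)
        refine Or.inl ?_
        rw [hC, connectedComponentIn_eq hwC, ← connectedComponentIn_eq hwy]
        exact mem_connectedComponentIn hy
      · exact Or.inr hyC
    obtain ⟨z, -, hzC, hzC'⟩ := h C (closure C)ᶜ (hU x hx) isClosed_closure.isOpen_compl hcover
      ⟨x, subset_insert _ _ hx, mem_connectedComponentIn hx⟩ ⟨p, mem_insert _ _, hp⟩
    exact hzC' (subset_closure hzC)
  · intro h
    refine isPreconnected_of_forall p fun y hy => ?_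
    rcases hy with rfl | hy
    · exact ⟨{y}, singleton_subset_iff.mpr (mem_insert _ _), rfl, rfl, isPreconnected_singleton⟩
    · exact ⟨insert p (connectedComponentIn U y),
        insert_subset_insert (connectedComponentIn_subset _ _), mem_insert _ _,
        subset_insert _ _ (mem_connectedComponentIn hy),
        isPreconnected_connectedComponentIn.subset_closure (subset_insert _ _)
          (insert_subset (h y hy) subset_closure)⟩

theorem Topology.IsEmbedding.image_connectedComponentIn {X Y : Type*} [TopologicalSpace X]
    [TopologicalSpace Y] {f : X → Y} (hf : IsEmbedding f) {U : Set X} {x : X} (hx : x ∈ U) :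
    f '' connectedComponentIn U x = connectedComponentIn (f '' U) (f x) := by
  refine (hf.continuous.continuousOn.image_connectedComponentIn_subset hx).antisymm ?_
  set D := connectedComponentIn (f '' U) (f x)
  have hD : f '' (f ⁻¹' D) = D :=
    image_preimage_eq_of_subset ((connectedComponentIn_subset _ _).trans (image_subset_range _ _))
  have hpre : IsPreconnected (f ⁻¹' D) := by
    rw [← hf.isInducing.isPreconnected_image, hD]
    exact isPreconnected_connectedComponentIn
  have hsub : f ⁻¹' D ⊆ U := by
    rw [← hf.injective.preimage_image U]
    exact preimage_mono (connectedComponentIn_subset _ _)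
  rw [← hD]
  exact image_mono (hpre.subset_connectedComponentIn
    (mem_connectedComponentIn (mem_image_of_mem f hx)) hsub)

theorem connectedComponentIn_preimage_val {X : Type*} [TopologicalSpace X] {G U : Set X}
    (hUG : U ⊆ G) {x : G} (hx : (x : X) ∈ U) :
    connectedComponentIn ((↑) ⁻¹' U : Set G) x = (↑) ⁻¹' connectedComponentIn U x := by
  have h := IsEmbedding.subtypeVal.image_connectedComponentIn (U := ((↑) ⁻¹' U : Set G)) hx
  rw [Subtype.image_preimage_coe, inter_eq_right.mpr hUG] at h
  rw [← h, Subtype.val_injective.preimage_image]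

theorem OnePoint.infty_mem_closure_image_coe_iff {X : Type*} [TopologicalSpace X] {A : Set X} :
    (∞ : OnePoint X) ∈ closure ((↑) '' A) ↔ ¬ IsCompact (closure A) := by
  rw [mem_closure_iff_nhds_basis hasBasis_nhds_infty]
  constructor
  · rintro h hc
    obtain ⟨_, ⟨a, haA, rfl⟩, ha | ha⟩ := h (closure A) ⟨isClosed_closure, hc⟩
    · obtain ⟨b, hb, hba⟩ := ha
      exact hb (coe_injective hba ▸ subset_closure haA)
    · exact coe_ne_infty a ha
  · rintro h K ⟨hKc, hKcpt⟩
    by_contra! hno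
    have hAK : A ⊆ K := fun a ha => by_contra fun haK => hno _ (mem_image_of_mem _ ha) (Or.inl ⟨a, haK, rfl⟩)
    exact h (hKcpt.of_isClosed_subset isClosed_closure (closure_minimal hAK hKc))

theorem OnePoint.isConnected_insert_infty_image_coe_iff {X : Type*} [TopologicalSpace X]
    [LocallyConnectedSpace X] {U : Set X} (hU : IsOpen U) :
    IsConnected (insert ∞ ((↑) '' U : Set (OnePoint X))) ↔
      ∀ x ∈ U, ¬ IsCompact (closure (connectedComponentIn U x)) := by
  have hemb : IsEmbedding ((↑) : X → OnePoint X) := isOpenEmbedding_coe.isEmbedding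
  rw [IsConnected, and_iff_right (insert_nonempty _ _),
    isPreconnected_insert_iff_forall_mem_closure_connectedComponentIn, forall_mem_image]
  · refine forall₂_congr fun x hx => ?_
    rw [← hemb.image_connectedComponentIn hx, infty_mem_closure_image_coe_iff]
  · rintro _ ⟨x, hx, rfl⟩
    rw [← hemb.image_connectedComponentIn hx, isOpen_image_coe]
    exact hU.connectedComponentIn

theorem isCompact_closure_preimage_val_iff {E : Type*} [MetricSpace E] [ProperSpace E]
    {G C : Set E} (hCG : C ⊆ G) :
    IsCompact (closure ((↑) ⁻¹' C : Set G)) ↔ IsBounded C ∧ closure C ⊆ G := by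
  rw [IsEmbedding.subtypeVal.closure_eq_preimage_closure_image, Subtype.image_preimage_coe,
    inter_eq_right.mpr hCG, Subtype.isCompact_iff, Subtype.image_preimage_coe]
  constructor
  · intro h
    have hclG : closure C ⊆ G ∩ closure C :=
      closure_minimal (subset_inter hCG subset_closure) h.isClosed
    exact ⟨h.isBounded.subset (hclG.trans' subset_closure), hclG.trans inter_subset_left⟩
  · rintro ⟨hb, hclG⟩
    rw [inter_eq_right.mpr hclG]
    exact hb.isCompact_closure

theorem IsOpen.closure_inter_frontier_nonempty_iff {X : Type*} [TopologicalSpace X]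
    {G C : Set X} (hG : IsOpen G) (hCG : C ⊆ G) :
    (closure C ∩ frontier G).Nonempty ↔ ¬ closure C ⊆ G := by
  rw [hG.frontier_eq, not_subset]
  exact ⟨fun ⟨x, hxC, _, hxG⟩ => ⟨x, hxC, hxG⟩,
    fun ⟨x, hxC, hxG⟩ => ⟨x, hxC, closure_mono hCG hxC, hxG⟩⟩

theorem stmt_19_general (G : Set ℂ) (hGo : IsOpen G)
    (F : Set ℂ)
    (hFcl : IsClosed ((fun z : G => (z : ℂ)) ⁻¹' F)) :
    IsConnected {p : OnePoint G |
        p ∉ (fun z : G => (OnePoint.some z : OnePoint G)) '' {z : G | (z : ℂ) ∈ F}} ↔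
      ∀ z ∈ G \ F,
        ¬ IsBounded (connectedComponentIn (G \ F) z) ∨
          (closure (connectedComponentIn (G \ F) z) ∩ frontier G).Nonempty := by
  have := hGo.locallyConnectedSpace
  set V : Set G := (↑) ⁻¹' (G \ F)
  have hV : V = ((fun z : G => (z : ℂ)) ⁻¹' F)ᶜ := by ext z; simp [V]
  have hS : {p : OnePoint G |
      p ∉ (fun z : G => (OnePoint.some z : OnePoint G)) '' {z : G | (z : ℂ) ∈ F}} =
        insert ∞ ((↑) '' V) := by
    ext p
    induction p using OnePoint.rec with
    | infty => simp
    | coe x =>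
      rw [mem_ofPred_eq, coe_injective.mem_set_image]
      simp only [mem_ofPred_eq, hV, mem_insert_iff, coe_ne_infty, coe_injective.mem_set_image,
        mem_compl_iff, mem_preimage, false_or]
  have hcomp : ∀ z (hz : z ∈ G \ F), ¬ IsCompact (closure (connectedComponentIn V ⟨z, hz.1⟩)) ↔
      ¬ IsBounded (connectedComponentIn (G \ F) z) ∨
        (closure (connectedComponentIn (G \ F) z) ∩ frontier G).Nonempty := by
    intro z hz
    have hCG : connectedComponentIn (G \ F) z ⊆ G :=
      (connectedComponentIn_subset _ _).trans sdiff_subset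
    rw [connectedComponentIn_preimage_val sdiff_subset hz, isCompact_closure_preimage_val_iff hCG,
      hGo.closure_inter_frontier_nonempty_iff hCG, not_and_or]
  rw [hS, isConnected_insert_infty_image_coe_iff (hV ▸ hFcl.isOpen_compl)]
  exact ⟨fun h z hz => (hcomp z hz).1 (h ⟨z, hz.1⟩ hz), fun h x hx => (hcomp x hx).2 (h x hx)⟩

/-- For a domain `G ⊆ ℂ` with Alexandroff compactification `G* = G ∪ {∞}` and a
relatively closed `F ⊆ G`, the set `G* \ F` is connected iff every connected
component of `G \ F` is unbounded or has an accumulation point on `∂G`. -/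
theorem stmt_19 (G : Set ℂ) (hGo : IsOpen G) (hGc : IsConnected G)
    (F : Set ℂ) (hFG : F ⊆ G)
    (hFcl : IsClosed ((fun z : G => (z : ℂ)) ⁻¹' F)) :
    IsConnected {p : OnePoint G |
        p ∉ (fun z : G => (OnePoint.some z : OnePoint G)) '' {z : G | (z : ℂ) ∈ F}} ↔
      ∀ z ∈ G \ F,
        ¬ IsBounded (connectedComponentIn (G \ F) z) ∨
          (closure (connectedComponentIn (G \ F) z) ∩ frontier G).Nonempty :=
  stmt_19_general G hGo F hFcl
end
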